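/- arXiv:1812.11309 — 4 statements merged into one kernel-verified Lean document; each statement's English description precedes it below -/
import Mathlib

section
/- For all natural numbers n, n', t with 1 ≤ n' ≤ n, the real-number inequality (1 − n'/n²)^{⌈n/n'⌉·t} ≤ e^{−t/n} holds. -/
theorem one_sub_pow_ceil_le_exp (n n' t : ℕ) (h1 : 1 ≤ n') (h2 : n' ≤ n) :
    (1 - (n' : ℝ) / (n : ℝ) ^ 2) ^ (⌈(n : ℝ) / (n' : ℝ)⌉₊ * t) ≤
      Real.exp (-(t : ℝ) / (n : ℝ)) := by
  have hn : (1 : ℝ) ≤ n := by exact_mod_cast le_trans h1 h2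
  have hn0 : (0 : ℝ) < n := by linarith
  have hn'0 : (0 : ℝ) < n' := by exact_mod_cast h1
  set a : ℝ := (n' : ℝ) / (n : ℝ) ^ 2 with ha
  have ha0 : 0 ≤ a := by positivity
  have ha1 : a ≤ 1 := by
    rw [div_le_one (by positivity)]
    have : (n' : ℝ) ≤ n := by exact_mod_cast h2
    nlinarith
  have hbase : 1 - a ≤ Real.exp (-a) := by
    have := Real.add_one_le_exp (-a)
    linarith
  set k := ⌈(n : ℝ) / (n' : ℝ)⌉₊ * t with hk
  have hpow : (1 - a) ^ k ≤ Real.exp (-a) ^ k :=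
    pow_le_pow_left₀ (by linarith) hbase k
  rw [← Real.exp_nat_mul] at hpow
  refine hpow.trans (Real.exp_le_exp.2 ?_)
  have hceil : (n : ℝ) / (n' : ℝ) ≤ (⌈(n : ℝ) / (n' : ℝ)⌉₊ : ℝ) := Nat.le_ceil _
  have hka : (t : ℝ) / n ≤ (k : ℝ) * a := by
    rw [hk, ha]
    push_cast
    rw [div_le_iff₀ hn0]
    have h1' : (n : ℝ) / n' * (n' / n ^ 2) = 1 / n := by
      field_simp
    have h2' : (n : ℝ) / n' * ((n' / n ^ 2) * n) ≤
        (⌈(n : ℝ) / (n' : ℝ)⌉₊ : ℝ) * ((n' / n ^ 2) * n) := by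
      apply mul_le_mul_of_nonneg_right hceil
      positivity
    calc (t : ℝ) = (n / n' * (n' / n ^ 2)) * n * t := by
          rw [h1']; field_simp
      _ ≤ (⌈(n : ℝ) / (n' : ℝ)⌉₊ : ℝ) * (n' / n ^ 2) * n * t := by
          have := mul_le_mul_of_nonneg_right (mul_le_mul_of_nonneg_right
            hceil (by positivity : (0:ℝ) ≤ (n' : ℝ) / n ^ 2)) hn0.le
          exact mul_le_mul_of_nonneg_right this t.cast_nonneg
      _ = (⌈(n : ℝ) / (n' : ℝ)⌉₊ : ℝ) * t * (n' / n ^ 2) * n := by ring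
  rw [mul_neg]
  rw [neg_div]
  linarith
end

section
/- Let n ≥ 2 and let X₁, …, X_n be independent Geometric(1/2) random variables on ℕ. Let s_max = max_{1 ≤ v ≤ n} X_v. Then for every i with 2 ≤ i ≤ n, the probability that exactly i of the variables attain the maximum is at most 2^{1−i}; that is, Pr(|{v : X_v = s_max}| = i) ≤ 2^{1−i}. -/
open MeasureTheory ProbabilityTheory Finset
open scoped ENNReal

/-!
Split the event according to the value `j` of the maximum and the set `S` of the `i`
coordinates attaining it: it is covered by the boxes `maxBlock j S` with `#S = i`. Relaxing
"`= j` on `S`" to "`≥ j` on `S`, with minimum `j`" multiplies the probability by `2 ^ i - 1`,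
because `P(X ≥ j) = 2 P(X = j)` and `P(X ≥ j + 1) = P(X = j)`. The relaxed boxes
`thresholdBlock j S` with `#S = i` are pairwise disjoint, since `S` is then the set of coordinates
`≥ j`, and a set of the form `{v | j ≤ x v}` is determined by `x` and its cardinality. Hence
`(2 ^ i - 1) p ≤ 1` for the probability `p` of exactly `i` maxima, and with `p ≤ 1` this gives
`2 ^ i p ≤ 2`.
-/

theorem MeasureTheory.Measure.pi_univ_pi_ite {ι α : Type*} [Fintype ι] [DecidableEq ι]
    [MeasurableSpace α] (P : ι → Measure α) [∀ v, SigmaFinite (P v)] (S : Finset ι)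
    (A B : Set α) :
    Measure.pi P (Set.univ.pi fun v => if v ∈ S then A else B) =
      (∏ v ∈ S, P v A) * ∏ v ∈ Sᶜ, P v B := by
  rw [Measure.pi_pi, ← prod_mul_prod_compl S]
  congr 1 <;> refine prod_congr rfl fun v hv => ?_ <;> simp_all

theorem measure_Ici_of_geometric {p : Measure ℕ} [IsProbabilityMeasure p]
    (hp : ∀ j, p {j} = 2⁻¹ ^ (j + 1)) (j : ℕ) : p (Set.Ici j) = 2⁻¹ ^ j := by
  induction j with
  | zero => simp
  | succ k ih =>
    have hsplit : Set.Ici k = {k} ∪ Set.Ici (k + 1) := by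
      ext; simp only [Set.mem_Ici, Set.mem_union, Set.mem_singleton_iff]; omega
    have hhalf : (2 : ℝ≥0∞)⁻¹ ^ k = 2⁻¹ ^ (k + 1) + 2⁻¹ ^ (k + 1) := by
      rw [pow_succ, ← mul_add, ENNReal.inv_two_add_inv_two, mul_one]
    rw [hsplit, measure_union (by simp) measurableSet_Ici, hp, hhalf] at ih
    exact (ENNReal.add_right_inj (ENNReal.pow_ne_top (ENNReal.inv_ne_top.2 two_ne_zero))).mp ih

section Blocks

variable {ι : Type*} [DecidableEq ι]

def maxBlock (j : ℕ) (S : Finset ι) : Set (ι → ℕ) :=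
  Set.univ.pi fun v => if v ∈ S then {j} else Set.Iio j

def thresholdBlock (j : ℕ) (S : Finset ι) : Set (ι → ℕ) :=
  (Set.univ.pi fun v => if v ∈ S then Set.Ici j else Set.Iio j) \
    Set.univ.pi fun v => if v ∈ S then Set.Ici (j + 1) else Set.Iio j

theorem mem_maxBlock_sup [Fintype ι] (x : ι → ℕ) :
    x ∈ maxBlock (univ.sup x) {v | x v = univ.sup x} := by
  intro v _
  by_cases hv : x v = univ.sup x
  · simp [hv]
  · simpa [hv] using lt_of_le_of_ne (le_sup (mem_univ v)) hv

theorem mem_thresholdBlock {j : ℕ} {S : Finset ι} {x : ι → ℕ} :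
    x ∈ thresholdBlock j S ↔ (∀ v, v ∈ S ↔ j ≤ x v) ∧ ∃ v ∈ S, x v = j := by
  simp only [thresholdBlock, Set.mem_sdiff, Set.mem_univ_pi]
  have hmem : ∀ v c, x v ∈ (if v ∈ S then Set.Ici c else Set.Iio j) ↔
      (v ∈ S → c ≤ x v) ∧ (v ∉ S → x v < j) := by
    intro v c; split_ifs <;> simp [*]
  simp only [hmem]
  grind

theorem disjoint_thresholdBlock {j k : ℕ} {S T : Finset ι} (hST : #S = #T)
    (hne : (j, S) ≠ (k, T)) :
    Disjoint (thresholdBlock j S) (thresholdBlock k T) := by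
  rw [Set.disjoint_left]
  intro x hj hk
  obtain ⟨hS, v, hvS, hv⟩ := mem_thresholdBlock.1 hj
  obtain ⟨hT, w, hwT, hw⟩ := mem_thresholdBlock.1 hk
  obtain rfl : S = T := by
    rcases le_total j k with h | h
    · exact (eq_of_subset_of_card_le (fun v hv => (hS v).2 (h.trans ((hT v).1 hv))) hST.le).symm
    · exact eq_of_subset_of_card_le (fun v hv => (hT v).2 (h.trans ((hS v).1 hv))) hST.ge
  have hjk : j ≤ k := hw ▸ (hS w).1 hwT
  have hkj : k ≤ j := hv ▸ (hT v).1 hvS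
  exact hne (by rw [le_antisymm hjk hkj])

end Blocks

section Geometric

variable {ι : Type*} [Fintype ι] [DecidableEq ι] {P : ι → Measure ℕ}
  [∀ v, IsProbabilityMeasure (P v)]

theorem measure_thresholdBlock (hP : ∀ v j, P v {j} = 2⁻¹ ^ (j + 1)) (j : ℕ)
    (S : Finset ι) :
    Measure.pi P (thresholdBlock j S) = (2 ^ #S - 1) * Measure.pi P (maxBlock j S) := by
  set c := ∏ v ∈ Sᶜ, P v (Set.Iio j)
  have hmax : Measure.pi P (maxBlock j S) = (2⁻¹ ^ (j + 1)) ^ #S * c := by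
    rw [maxBlock, Measure.pi_univ_pi_ite, prod_congr rfl fun v _ => hP v j, prod_const]
  have hupper : Measure.pi P (Set.univ.pi fun v => if v ∈ S then Set.Ici (j + 1) else Set.Iio j) =
      Measure.pi P (maxBlock j S) := by
    rw [Measure.pi_univ_pi_ite, prod_congr rfl fun v _ => measure_Ici_of_geometric (hP v) (j + 1),
      prod_const, hmax]
  have hlower : Measure.pi P (Set.univ.pi fun v => if v ∈ S then Set.Ici j else Set.Iio j) =
      2 ^ #S * Measure.pi P (maxBlock j S) := by
    have hhalf : (2 : ℝ≥0∞)⁻¹ ^ j = 2 * 2⁻¹ ^ (j + 1) := by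
      rw [pow_succ', ← mul_assoc, ENNReal.mul_inv_cancel two_ne_zero ENNReal.ofNat_ne_top,
        one_mul]
    rw [Measure.pi_univ_pi_ite, prod_congr rfl fun v _ => measure_Ici_of_geometric (hP v) j,
      prod_const, hmax, hhalf, mul_pow, mul_assoc]
  have hsub : (Set.univ.pi fun v => if v ∈ S then Set.Ici (j + 1) else Set.Iio j) ⊆
      Set.univ.pi fun v => if v ∈ S then Set.Ici j else Set.Iio j :=
    Set.pi_mono fun v _ => by
      split_ifs
      exacts [Set.Ici_subset_Ici.2 j.le_succ, subset_rfl]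
  rw [thresholdBlock, measure_sdiff hsub (Set.to_countable _).measurableSet.nullMeasurableSet
    (measure_ne_top _ _), hlower, hupper, ENNReal.sub_mul fun _ _ => measure_ne_top _ _, one_mul]

theorem two_pow_sub_one_mul_measure_pi_card_argmax_le_one
    (hP : ∀ v j, P v {j} = 2⁻¹ ^ (j + 1)) (i : ℕ) :
    (2 ^ i - 1) * Measure.pi P {x | #{v | x v = univ.sup x} = i} ≤ 1 := by
  let Idx := ℕ × {S : Finset ι // #S = i}
  have hcover : {x : ι → ℕ | #{v | x v = univ.sup x} = i} ⊆ ⋃ p : Idx, maxBlock p.1 p.2 :=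
    fun x hx => Set.mem_iUnion.2 ⟨(univ.sup x, ⟨_, hx⟩), mem_maxBlock_sup x⟩
  have hdisj : Pairwise (Function.onFun Disjoint fun p : Idx => thresholdBlock p.1 p.2.1) :=
    fun p q hpq => disjoint_thresholdBlock (p.2.2.trans q.2.2.symm)
      fun h => hpq (Prod.ext (Prod.mk.inj h).1 (Subtype.ext (Prod.mk.inj h).2))
  calc (2 ^ i - 1) * Measure.pi P {x | #{v | x v = univ.sup x} = i}
      ≤ (2 ^ i - 1) * ∑' p : Idx, Measure.pi P (maxBlock p.1 p.2) := by
        gcongr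
        exact (measure_mono hcover).trans (measure_iUnion_le _)
    _ = ∑' p : Idx, Measure.pi P (thresholdBlock p.1 p.2.1) := by
        rw [← ENNReal.tsum_mul_left]
        exact tsum_congr fun p => by rw [measure_thresholdBlock hP, p.2.2]
    _ = Measure.pi P (⋃ p : Idx, thresholdBlock p.1 p.2.1) :=
        (measure_iUnion hdisj fun _ => (Set.to_countable _).measurableSet).symm
    _ ≤ 1 := prob_le_one

end Geometric

theorem ENNReal.toReal_le_two_zpow_one_sub {p : ℝ≥0∞} {i : ℕ} (hp : p ≤ 1)
    (h : (2 ^ i - 1) * p ≤ 1) : p.toReal ≤ (2 : ℝ) ^ ((1 : ℤ) - i) := by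
  have h2 : 2 ^ i * p ≤ 2 := by
    calc 2 ^ i * p = (2 ^ i - 1) * p + p := by
          rw [← add_one_mul, tsub_add_cancel_of_le (one_le_pow₀ one_le_two)]
      _ ≤ 1 + 1 := add_le_add h hp
      _ = 2 := one_add_one_eq_two
  have h2' : 2 ^ i * p.toReal ≤ 2 := by
    simpa using ENNReal.toReal_mono (by norm_num) h2
  rw [zpow_sub₀ two_ne_zero, zpow_one, zpow_natCast, le_div_iff₀ (by positivity)]
  linarith

theorem geometric_exact_max_count_bound_general
    {Ω : Type*} [MeasurableSpace Ω] (μ : Measure Ω) [IsProbabilityMeasure μ]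
    (n : ℕ)
    (X : Fin n → Ω → ℕ)
    (hmeas : ∀ v, Measurable (X v))
    (hindep : iIndepFun X μ)
    (hgeom : ∀ (v : Fin n) (j : ℕ), μ {ω | X v ω = j} = (2 : ℝ≥0∞)⁻¹ ^ (j + 1))
    (i : ℕ) :
    (μ {ω | (univ.filter fun v => X v ω = univ.sup fun u => X u ω).card = i}).toReal ≤
      (2 : ℝ) ^ ((1 : ℤ) - (i : ℤ)) := by
  have hlaw := hindep.map_fun_eq_pi_map fun v => (hmeas v).aemeasurable
  have := fun v => Measure.isProbabilityMeasure_map (μ := μ) (hmeas v).aemeasurable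
  have hgeom' : ∀ v j, μ.map (X v) {j} = 2⁻¹ ^ (j + 1) := fun v j => by
    rw [Measure.map_apply (hmeas v) (measurableSet_singleton j)]
    exact hgeom v j
  have hevent : μ {ω | (univ.filter fun v => X v ω = univ.sup fun u => X u ω).card = i} =
      Measure.pi (fun v => μ.map (X v)) {x | #{v | x v = univ.sup x} = i} := by
    rw [← hlaw, Measure.map_apply (measurable_pi_lambda _ hmeas)
      (Set.to_countable _).measurableSet]
    rfl
  rw [hevent]
  exact ENNReal.toReal_le_two_zpow_one_sub prob_le_one
    (two_pow_sub_one_mul_measure_pi_card_argmax_le_one hgeom' i)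

theorem geometric_exact_max_count_bound
    {Ω : Type*} [MeasurableSpace Ω] (μ : Measure Ω) [IsProbabilityMeasure μ]
    (n : ℕ) (hn : 2 ≤ n)
    (X : Fin n → Ω → ℕ)
    (hmeas : ∀ v, Measurable (X v))
    (hindep : iIndepFun X μ)
    (hgeom : ∀ (v : Fin n) (j : ℕ), μ {ω | X v ω = j} = (2 : ℝ≥0∞)⁻¹ ^ (j + 1))
    (i : ℕ) (hi2 : 2 ≤ i) (hin : i ≤ n) :
    (μ {ω | (univ.filter fun v => X v ω = univ.sup fun u => X u ω).card = i}).toReal ≤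
      (2 : ℝ) ^ ((1 : ℤ) - (i : ℤ)) :=
  geometric_exact_max_count_bound_general μ n X hmeas hindep hgeom i
end

section
/- Let i ≥ 1 and M ≥ 1 be integers, and let R₁, …, R_i be independent random variables, each uniformly distributed on {0, 1, …, M−1}. Then the probability that the maximum value is attained by exactly one of them is at least 1 − (i−1)/M; that is, Pr(|{v : R_v = max_u R_u}| = 1) ≥ 1 − (i−1)/M. -/
open MeasureTheory ProbabilityTheory Finset
open scoped ENNReal

/-!
Scan the variables in index order and call `v` a tie if `R v` equals the maximum of the earlier
values. If the overall maximum is attained twice, the later of the two attaining indices is a tie,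
and it is not the first index. Since `R v` is independent of the earlier values and takes each
value with probability at most `1/M`, each of the `i - 1` later indices is a tie with probability
at most `1/M`; a union bound finishes the proof.
-/

section PrefixMax

variable {ι α : Type*} [Fintype ι] [LinearOrder ι] [LinearOrder α] [OrderBot α]

def prefixMax (x : ι → α) (v : ι) : α := (univ.filter (· < v)).sup x

lemma prefixMax_le_sup (x : ι → α) (v : ι) : prefixMax x v ≤ univ.sup x :=
  sup_mono (filter_subset _ _)

lemma exists_ne_bot_eq_prefixMax [OrderBot ι] (x : ι → α)
    (h : #{v | x v = univ.sup x} ≠ 1) : ∃ v ≠ ⊥, x v = prefixMax x v := by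
  have hne : ({v | x v = univ.sup x} : Finset ι).Nonempty := by
    obtain ⟨v, -, hv⟩ := exists_mem_eq_sup univ univ_nonempty x
    exact ⟨v, by simp [hv]⟩
  obtain ⟨a, ha, b, hb, hab⟩ := one_lt_card.1 (lt_of_le_of_ne hne.card_pos (Ne.symm h))
  wlog hlt : a < b generalizing a b
  · exact this b hb a ha hab.symm (lt_of_le_of_ne (not_lt.1 hlt) hab.symm)
  rw [mem_filter] at ha hb
  refine ⟨b, ne_bot_of_gt hlt, le_antisymm ?_ (hb.2 ▸ prefixMax_le_sup x b)⟩
  rw [hb.2, ← ha.2]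
  exact le_sup (mem_filter.2 ⟨mem_univ a, hlt⟩)

end PrefixMax

namespace ProbabilityTheory

variable {Ω : Type*} [MeasurableSpace Ω] {μ : Measure Ω}

lemma measure_preimage_singleton_le_inv [IsProbabilityMeasure μ] {X : Ω → ℕ}
    (hX : Measurable X) {M : ℕ} (hunif : ∀ j < M, μ (X ⁻¹' {j}) = (M : ℝ≥0∞)⁻¹) (j : ℕ) :
    μ (X ⁻¹' {j}) ≤ (M : ℝ≥0∞)⁻¹ := by
  rcases eq_or_ne M 0 with rfl | hM
  · simp
  by_cases hj : j < M
  · exact (hunif j hj).le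
  have hfull : μ (X ⁻¹' ↑(range M)) = 1 := by
    rw [← sum_measure_preimage_singleton _ fun k _ => hX (measurableSet_singleton k),
      sum_congr rfl fun k hk => hunif k (mem_range.1 hk), sum_const, card_range, nsmul_eq_mul,
      ENNReal.mul_inv_cancel (by exact_mod_cast hM) (ENNReal.natCast_ne_top M)]
  have hnull : μ (X ⁻¹' ↑(range M))ᶜ = 0 :=
    (prob_compl_eq_zero_iff (hX (Finset.measurableSet _))).2 hfull
  calc μ (X ⁻¹' {j}) ≤ μ (X ⁻¹' ↑(range M))ᶜ :=
        measure_mono fun ω (hω : X ω = j) hmem => hj (hω ▸ by simpa using hmem)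
    _ = 0 := hnull
    _ ≤ _ := zero_le

lemma IndepFun.measure_eq_le [IsProbabilityMeasure μ] {α : Type*} [Countable α]
    [MeasurableSpace α] [MeasurableSingletonClass α] {X Y : Ω → α} (hXY : IndepFun X Y μ)
    (hY : Measurable Y) {c : ℝ≥0∞} (hc : ∀ a, μ (X ⁻¹' {a}) ≤ c) :
    μ {ω | X ω = Y ω} ≤ c := by
  have hdiag : {ω | X ω = Y ω} = ⋃ a, X ⁻¹' {a} ∩ Y ⁻¹' {a} := by
    ext ω; simp [eq_comm]
  calc μ {ω | X ω = Y ω} ≤ ∑' a, μ (X ⁻¹' {a} ∩ Y ⁻¹' {a}) :=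
        hdiag ▸ measure_iUnion_le _
    _ = ∑' a, μ (X ⁻¹' {a}) * μ (Y ⁻¹' {a}) := tsum_congr fun a =>
        hXY.measure_inter_preimage_eq_mul _ _ (measurableSet_singleton a)
          (measurableSet_singleton a)
    _ ≤ ∑' a, c * μ (Y ⁻¹' {a}) := ENNReal.tsum_le_tsum fun a => mul_le_mul_left (hc a) _
    _ = c * μ (Y ⁻¹' Set.univ) := by
        rw [ENNReal.tsum_mul_left, ← tsum_univ, tsum_measure_preimage_singleton
          Set.countable_univ fun a _ => hY (measurableSet_singleton a)]
    _ = c := by simp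

variable {ι α : Type*} [Fintype ι] [LinearOrder ι] [LinearOrder α] [OrderBot α] [Countable α]
  [MeasurableSpace α] [MeasurableSingletonClass α]

lemma measurable_prefixMax {X : ι → Ω → α} (hX : ∀ v, Measurable (X v)) (v : ι) :
    Measurable fun ω => prefixMax (fun u => X u ω) v :=
  (measurable_of_countable fun x : ι → α => prefixMax x v).comp (measurable_pi_lambda _ hX)

lemma iIndepFun.indepFun_prefixMax {X : ι → Ω → α} (hindep : iIndepFun X μ)
    (hX : ∀ v, Measurable (X v)) (v : ι) :
    IndepFun (X v) (fun ω => prefixMax (fun u => X u ω) v) μ := by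
  have h := (hindep.indepFun_finset {v} (univ.filter (· < v)) (by simp) hX).comp
    (measurable_of_countable fun x : ({v} : Finset ι) → α => x ⟨v, mem_singleton_self v⟩)
    (measurable_of_countable fun x : (univ.filter (· < v) : Finset ι) → α => univ.sup x)
  convert h using 1
  · rfl
  ext ω
  exact (sup_attach _ fun u => X u ω).symm

end ProbabilityTheory

theorem uniform_unique_max_prob
    {Ω : Type*} [MeasurableSpace Ω] (μ : Measure Ω) [IsProbabilityMeasure μ]
    (i M : ℕ) (hi : 1 ≤ i) (hM : 1 ≤ M)
    (R : Fin i → Ω → ℕ)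
    (hmeas : ∀ v, Measurable (R v))
    (hindep : iIndepFun R μ)
    (hunif : ∀ (v : Fin i) (j : ℕ), j < M → μ {ω | R v ω = j} = (M : ℝ≥0∞)⁻¹) :
    1 - ((i : ℝ) - 1) / (M : ℝ) ≤
      (μ {ω | (univ.filter fun v => R v ω = univ.sup fun u => R u ω).card = 1}).toReal := by
  have : NeZero i := ⟨by omega⟩
  set G := {ω | (univ.filter fun v => R v ω = univ.sup fun u => R u ω).card = 1}
  set tie : Fin i → Set Ω := fun v => {ω | R v ω = prefixMax (fun u => R u ω) v}
  have htie : ∀ v, μ.real (tie v) ≤ (M : ℝ)⁻¹ := fun v => by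
    have h := (hindep.indepFun_prefixMax hmeas v).measure_eq_le (measurable_prefixMax hmeas v)
      (measure_preimage_singleton_le_inv (hmeas v) (hunif v))
    exact (ENNReal.toReal_mono (by simp; omega) h).trans_eq (by simp)
  have hcover : Gᶜ ⊆ ⋃ v ∈ univ.erase ⊥, tie v := fun ω hω => by
    obtain ⟨v, hv, hvtie⟩ := exists_ne_bot_eq_prefixMax (fun u => R u ω) hω
    exact Set.mem_biUnion (mem_erase.2 ⟨hv, mem_univ v⟩) hvtie
  have hbad : μ.real Gᶜ ≤ ((i : ℝ) - 1) / M := calc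
    μ.real Gᶜ ≤ ∑ v ∈ univ.erase ⊥, μ.real (tie v) :=
      (measureReal_mono hcover (measure_ne_top _ _)).trans (measureReal_biUnion_finset_le _ _)
    _ ≤ ∑ _v ∈ univ.erase (⊥ : Fin i), (M : ℝ)⁻¹ := sum_le_sum fun v _ => htie v
    _ = ((i : ℝ) - 1) / M := by
      rw [sum_const, card_erase_of_mem (mem_univ _), card_univ, Fintype.card_fin, nsmul_eq_mul,
        Nat.cast_sub hi, Nat.cast_one, div_eq_mul_inv]
  have hsplit : 1 ≤ μ.real G + μ.real Gᶜ := by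
    simpa [Set.union_compl_self] using measureReal_union_le (μ := μ) G Gᶜ
  change _ ≤ μ.real G
  linarith
end

section
/- There exists a natural number n₀ such that for all n ≥ n₀ the following holds: if X is a Binomial random variable with ⌊9·n·ln n⌋ trials and success probability 1/n, then Pr(X ≤ 2·log₂ n) ≤ n^{−2}. -/
open MeasureTheory ProbabilityTheory
open scoped ENNReal

/-- Numeric fact: `4 log 3 ≤ 7 log 2`, i.e. `81 ≤ 128`. -/
lemma four_log_three_le : 4 * Real.log 3 ≤ 7 * Real.log 2 := by
  have h1 : Real.log (3 ^ (4:ℕ)) ≤ Real.log (2 ^ (7:ℕ)) := by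
    apply Real.log_le_log (by positivity)
    norm_num
  rwa [Real.log_pow, Real.log_pow] at h1

/-- The purely real Chernoff-style estimate. -/
lemma binomial_real_sum_bound (n : ℕ) (hn : 8 ≤ n) :
    ∑ k ∈ Finset.range (⌊2 * Real.logb 2 (n : ℝ)⌋₊ + 1),
      ((⌊9 * (n : ℝ) * Real.log (n : ℝ)⌋₊.choose k : ℝ) * ((n : ℝ)⁻¹) ^ k *
        (1 - (n : ℝ)⁻¹) ^ (⌊9 * (n : ℝ) * Real.log (n : ℝ)⌋₊ - k)) ≤
      (n : ℝ) ^ (-2 : ℤ) := by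
  set N : ℕ := ⌊9 * (n : ℝ) * Real.log (n : ℝ)⌋₊ with hN
  set M : ℕ := ⌊2 * Real.logb 2 (n : ℝ)⌋₊ with hM
  have hn8 : (8 : ℝ) ≤ (n : ℝ) := by exact_mod_cast hn
  have hnpos : (0 : ℝ) < n := by linarith
  set p : ℝ := ((n : ℝ))⁻¹ with hp
  have hppos : 0 < p := by positivity
  have hpn : p * n = 1 := inv_mul_cancel₀ (ne_of_gt hnpos)
  have hple : p ≤ 1 / 8 := by
    rw [hp, show (1:ℝ)/8 = (8:ℝ)⁻¹ by norm_num]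
    exact inv_anti₀ (by norm_num) hn8
  have hl2 : (0.6931471803 : ℝ) < Real.log 2 := Real.log_two_gt_d9
  have hl2pos : (0 : ℝ) < Real.log 2 := by linarith
  have hl3 : 0 ≤ Real.log 3 := Real.log_nonneg (by norm_num)
  have hL : (2 : ℝ) ≤ Real.log n := by
    have h8 : Real.log 8 ≤ Real.log n := Real.log_le_log (by norm_num) hn8
    have : Real.log 8 = 3 * Real.log 2 := by
      rw [show (8:ℝ) = 2 ^ (3:ℕ) by norm_num, Real.log_pow]; norm_num
    linarith
  have hLpos : (0 : ℝ) < Real.log n := by linarith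
  have hcval : Real.logb 2 (n : ℝ) = Real.log n / Real.log 2 := rfl
  have hc0 : 0 ≤ 2 * Real.logb 2 (n : ℝ) := by
    rw [hcval]; positivity
  have hMle : (M : ℝ) ≤ 2 * Real.logb 2 (n : ℝ) := Nat.floor_le hc0
  have hMN : M ≤ N := by
    apply Nat.floor_le_floor
    rw [hcval, mul_div_assoc', div_le_iff₀ hl2pos]
    have h9 : (2:ℝ) ≤ 9 * (n:ℝ) * Real.log 2 := by nlinarith
    nlinarith [mul_le_mul_of_nonneg_right h9 hLpos.le]
  have hNge : 9 * (n : ℝ) * Real.log n - 1 < (N : ℝ) :=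
    Nat.sub_one_lt_floor _
  -- step 1: pointwise bound by tilted terms
  have step1 : ∑ k ∈ Finset.range (M + 1),
      ((N.choose k : ℝ) * p ^ k * (1 - p) ^ (N - k)) ≤
      (3 : ℝ) ^ M * ∑ k ∈ Finset.range (N + 1),
        ((p / 3) ^ k * (1 - p) ^ (N - k) * (N.choose k : ℝ)) := by
    rw [Finset.mul_sum]
    apply le_trans (Finset.sum_le_sum (g := fun k =>
      (3 : ℝ) ^ M * ((p / 3) ^ k * (1 - p) ^ (N - k) * (N.choose k : ℝ))) ?_)
    · apply Finset.sum_le_sum_of_subset_of_nonneg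
      · exact Finset.range_subset_range.mpr (by omega)
      · intro k _ _
        have h1p : (0:ℝ) ≤ 1 - p := by linarith
        positivity
    · intro k hk
      have hkM : k ≤ M := by
        simpa [Nat.lt_succ_iff] using Finset.mem_range.mp hk
      have h3 : (3 : ℝ) ^ k ≤ 3 ^ M := pow_le_pow_right₀ (by norm_num) hkM
      have h1p : (0:ℝ) ≤ 1 - p := by linarith
      have hpk : p ^ k = 3 ^ k * (p / 3) ^ k := by
        rw [← mul_pow]; ring_nf
      calc (N.choose k : ℝ) * p ^ k * (1 - p) ^ (N - k)
          = 3 ^ k * ((p / 3) ^ k * (1 - p) ^ (N - k) * (N.choose k : ℝ)) := by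
            rw [hpk]; ring
        _ ≤ 3 ^ M * ((p / 3) ^ k * (1 - p) ^ (N - k) * (N.choose k : ℝ)) := by
            apply mul_le_mul_of_nonneg_right h3
            positivity
  -- step 2: binomial theorem
  have step2 : ∑ k ∈ Finset.range (N + 1),
      ((p / 3) ^ k * (1 - p) ^ (N - k) * (N.choose k : ℝ)) =
      (1 - 2 * p / 3) ^ N := by
    rw [← add_pow]
    ring_nf
  -- step 3: exponential bounds
  have h1p23 : (0:ℝ) ≤ 1 - 2 * p / 3 := by linarith
  have step3a : (3 : ℝ) ^ M ≤ Real.exp (2 * Real.logb 2 (n:ℝ) * Real.log 3) := by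
    have h3 : (3 : ℝ) = Real.exp (Real.log 3) := (Real.exp_log (by norm_num)).symm
    calc (3 : ℝ) ^ M = Real.exp ((M : ℝ) * Real.log 3) := by
          rw [Real.exp_nat_mul, ← h3]
      _ ≤ _ := by
          apply Real.exp_le_exp.mpr
          exact mul_le_mul_of_nonneg_right hMle hl3
  have step3b : (1 - 2 * p / 3) ^ N ≤ Real.exp ((N : ℝ) * (-(2 * p / 3))) := by
    rw [Real.exp_nat_mul]
    apply pow_le_pow_left₀ h1p23
    have := Real.add_one_le_exp (-(2 * p / 3))
    linarith
  -- step 4: the scalar exponent inequality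
  have step4 : 2 * Real.logb 2 (n:ℝ) * Real.log 3 + (N : ℝ) * (-(2 * p / 3)) ≤
      -2 * Real.log n := by
    have h4 := four_log_three_le
    have hlb : 2 * Real.logb 2 (n:ℝ) * Real.log 3 ≤ 3.5 * Real.log n := by
      rw [hcval, mul_div_assoc', div_mul_eq_mul_div, div_le_iff₀ hl2pos]
      nlinarith
    have hNp : (N : ℝ) * (2 * p / 3) ≥ (9 * (n:ℝ) * Real.log n - 1) * (2 * p / 3) := by
      apply mul_le_mul_of_nonneg_right (le_of_lt hNge) (by positivity)
    have hexp : (9 * (n:ℝ) * Real.log n - 1) * (2 * p / 3) = 6 * Real.log n - 2 * p / 3 := by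
      linear_combination (6 * Real.log n) * hpn
    nlinarith
  -- assemble
  have hfin : ∑ k ∈ Finset.range (M + 1),
      ((N.choose k : ℝ) * p ^ k * (1 - p) ^ (N - k)) ≤
      Real.exp (-2 * Real.log n) := by
    calc ∑ k ∈ Finset.range (M + 1), ((N.choose k : ℝ) * p ^ k * (1 - p) ^ (N - k))
        ≤ (3 : ℝ) ^ M * ∑ k ∈ Finset.range (N + 1),
            ((p / 3) ^ k * (1 - p) ^ (N - k) * (N.choose k : ℝ)) := step1
      _ = (3 : ℝ) ^ M * (1 - 2 * p / 3) ^ N := by rw [step2]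
      _ ≤ Real.exp (2 * Real.logb 2 (n:ℝ) * Real.log 3) *
            Real.exp ((N : ℝ) * (-(2 * p / 3))) := by
          apply mul_le_mul step3a step3b (by positivity) (le_of_lt (Real.exp_pos _))
      _ = Real.exp (2 * Real.logb 2 (n:ℝ) * Real.log 3 + (N : ℝ) * (-(2 * p / 3))) := by
          rw [← Real.exp_add]
      _ ≤ Real.exp (-2 * Real.log n) := Real.exp_le_exp.mpr step4
  have hrhs : Real.exp (-2 * Real.log n) = (n : ℝ) ^ (-2 : ℤ) := by
    rw [show (-2 : ℝ) * Real.log n = -(Real.log n + Real.log n) by ring,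
      Real.exp_neg, Real.exp_add, Real.exp_log hnpos]
    rw [zpow_neg, zpow_two]
  rw [← hrhs]
  exact hfin

theorem binomial_lower_tail_eventually :
    ∃ n₀ : ℕ, ∀ n : ℕ, n₀ ≤ n →
      ∀ {Ω : Type} [MeasurableSpace Ω] (μ : Measure Ω), ∀ [IsProbabilityMeasure μ],
        ∀ (X : Ω → ℕ), Measurable X →
          (∀ k : ℕ, μ {ω | X ω = k} =
            ((⌊9 * (n : ℝ) * Real.log (n : ℝ)⌋₊.choose k : ℝ≥0∞)) *
              ((n : ℝ≥0∞)⁻¹) ^ k *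
              (1 - (n : ℝ≥0∞)⁻¹) ^ (⌊9 * (n : ℝ) * Real.log (n : ℝ)⌋₊ - k)) →
          (μ {ω | (X ω : ℝ) ≤ 2 * Real.logb 2 (n : ℝ)}).toReal ≤
            (n : ℝ) ^ (-2 : ℤ) := by
  refine ⟨8, fun n hn Ω _ μ _ X hX hpmf => ?_⟩
  set N : ℕ := ⌊9 * (n : ℝ) * Real.log (n : ℝ)⌋₊ with hNdef
  set M : ℕ := ⌊2 * Real.logb 2 (n : ℝ)⌋₊ with hMdef
  have hn1 : (1 : ℝ) ≤ (n : ℝ) := by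
    have : (8:ℝ) ≤ n := by exact_mod_cast hn
    linarith
  have hc0 : 0 ≤ 2 * Real.logb 2 (n : ℝ) := by
    have := Real.logb_nonneg (by norm_num : (1:ℝ) < 2) hn1
    linarith
  -- event decomposition
  have hE : {ω | (X ω : ℝ) ≤ 2 * Real.logb 2 (n : ℝ)} =
      ⋃ k ∈ Finset.range (M + 1), {ω | X ω = k} := by
    ext ω
    simp only [Set.mem_setOf_eq, Set.mem_iUnion, Finset.mem_range, Nat.lt_succ_iff,
      exists_prop]
    constructor
    · intro h
      exact ⟨X ω, Nat.le_floor h, rfl⟩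
    · rintro ⟨k, hk, he⟩
      rw [he]
      exact le_trans (by exact_mod_cast hk : (k:ℝ) ≤ (M:ℝ)) (Nat.floor_le hc0)
  have hsum : μ {ω | (X ω : ℝ) ≤ 2 * Real.logb 2 (n : ℝ)} =
      ∑ k ∈ Finset.range (M + 1), μ {ω | X ω = k} := by
    rw [hE]
    apply measure_biUnion_finset
    · intro i _ j _ hij
      simp only [Function.onFun, Set.disjoint_left]
      intro ω hωi hωj
      exact hij (hωi ▸ hωj ▸ rfl : i = j)
    · intro k _
      exact hX (measurableSet_singleton k)
  rw [hsum, ENNReal.toReal_sum (fun k _ => measure_ne_top μ _)]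
  have hinv_le : ((n : ℝ≥0∞))⁻¹ ≤ 1 := by
    apply ENNReal.inv_le_one.mpr
    exact_mod_cast (by omega : 1 ≤ n)
  have hterm : ∀ k, (μ {ω | X ω = k}).toReal =
      (N.choose k : ℝ) * ((n : ℝ)⁻¹) ^ k * (1 - (n : ℝ)⁻¹) ^ (N - k) := by
    intro k
    rw [hpmf k, ENNReal.toReal_mul, ENNReal.toReal_mul, ENNReal.toReal_pow,
      ENNReal.toReal_pow, ENNReal.toReal_inv,
      ENNReal.toReal_sub_of_le hinv_le ENNReal.one_ne_top, ENNReal.toReal_inv]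
    simp
  calc ∑ k ∈ Finset.range (M + 1), (μ {ω | X ω = k}).toReal
      = ∑ k ∈ Finset.range (M + 1),
          ((N.choose k : ℝ) * ((n : ℝ)⁻¹) ^ k * (1 - (n : ℝ)⁻¹) ^ (N - k)) :=
        Finset.sum_congr rfl (fun k _ => hterm k)
    _ ≤ (n : ℝ) ^ (-2 : ℤ) := binomial_real_sum_bound n hn
end
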